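/- For each k ∈ {1,…,n}, let Δ_{k,1}, …, Δ_{k,n_k} be nonnegative reals and let Δ_k := Σ_{i=1}^{n_k} Δ_{k,i}. Let C := Σ_{k=1}^n Δ_k and δ := max_{k=1}^n Δ_k. Then for any lower transition rate operator Q̲ on ℝ^𝒳 such that δ‖Q̲‖ ≤ 1, one has ‖∏_{k=1}^n (∏_{i=1}^{n_k} (I+Δ_{k,i}Q̲)) − ∏_{k=1}^n (I+Δ_kQ̲)‖ ≤ δ·C·‖Q̲‖², where the products denote operator compositions in the given order, ‖Q̲‖ := sup{‖Q̲f‖ : ‖f‖ = 1}, and for maps A, B : ℝ^𝒳 → ℝ^𝒳, ‖A − B‖ := sup{‖Af − Bf‖ : f ∈ ℝ^𝒳, ‖f‖ = 1}. -/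

import Mathlib

open scoped BigOperators

/-- A lower transition rate operator on `ℝ^𝒳`: maps constants to zero (LR1), is
nonnegative on off-diagonal indicators (LR2), super-additive (LR3), and
non-negatively homogeneous (LR4). -/
def IsLowerTransitionRateOperator {X : Type*} [Fintype X] [DecidableEq X]
    (Q : (X → ℝ) → (X → ℝ)) : Prop :=
  (∀ c : ℝ, Q (fun _ => c) = 0) ∧
  (∀ x y : X, y ≠ x → 0 ≤ Q (Pi.single y 1) x) ∧
  (∀ f g : X → ℝ, ∀ x : X, Q f x + Q g x ≤ Q (f + g) x) ∧
  (∀ c : ℝ, 0 ≤ c → ∀ f : X → ℝ, Q (c • f) = c • Q f)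

/-- The distance `‖A − B‖ = sup{‖Af − Bf‖ : ‖f‖ = 1}` between two maps of `ℝ^𝒳`,
where `‖·‖` is the supremum norm. -/
noncomputable def opDist {X : Type*} [Fintype X]
    (A B : (X → ℝ) → (X → ℝ)) : ℝ :=
  ⨆ f : {f : X → ℝ // ‖f‖ = 1}, ‖A f.1 - B f.1‖

/-- The operator norm `‖A‖ = sup{‖Af‖ : ‖f‖ = 1}` of a map of `ℝ^𝒳`. -/
noncomputable def opNorm {X : Type*} [Fintype X] (A : (X → ℝ) → (X → ℝ)) : ℝ :=
  ⨆ f : {f : X → ℝ // ‖f‖ = 1}, ‖A f.1‖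

/-- The composition `T 0 ∘ T 1 ∘ ⋯ ∘ T (n-1)` of a finite family of operators,
in the given order. -/
def compFamily {X : Type*} {n : ℕ} (T : Fin n → ((X → ℝ) → (X → ℝ))) :
    (X → ℝ) → (X → ℝ) :=
  (List.ofFn T).foldr (· ∘ ·) id

/-!
Write `S_d = I + d Q̲` (`eulerStep Q̲ d`). For `0 ≤ d` with `d ‖Q̲‖ ≤ 1`, `S_d` is nonexpansive
in the sup norm: superadditivity gives `S_d u - S_d v ≥ S_d (u - v)` pointwise, and
`S_d h ≥ -‖h‖` because `Q̲ h = Q̲ (h + ‖h‖)` while, for `g ≥ 0`, the nonnegative off-diagonal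
entries give `Q̲ g x ≥ g x · Q̲ 𝟙_x x ≥ -‖Q̲‖ g x`. The difference of the two products therefore
telescopes into the sum over `k` of the errors `‖∏_i S_{Δ_{k,i}} - S_{Δ_k}‖`. Each of these is
at most `Δ_k² ‖Q̲‖²`, since `Q̲` is `‖Q̲‖`-Lipschitz and the partial products move `f` by at most
`Δ_k ‖Q̲‖ ‖f‖`. Finally `Σ_k Δ_k² ≤ δ C`.
-/

def eulerStep {E : Type*} [AddCommGroup E] [Module ℝ E] (Q : E → E) (d : ℝ) : E → E :=
  fun g => g + d • Q g

section Composition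

lemma lipschitzWith_foldr_comp_ofFn {α : Type*} [PseudoEMetricSpace α] {n : ℕ}
    {T : Fin n → α → α} (hT : ∀ k, LipschitzWith 1 (T k)) :
    LipschitzWith 1 ((List.ofFn T).foldr (· ∘ ·) id) := by
  induction n with
  | zero => exact LipschitzWith.id
  | succ n ih =>
    rw [List.ofFn_succ, List.foldr_cons, ← one_mul (1 : NNReal)]
    exact (hT 0).comp (ih fun k => hT k.succ)

variable {E : Type*} [SeminormedAddCommGroup E]

lemma norm_foldr_comp_ofFn_le {n : ℕ} {T : Fin n → E → E} (hT : ∀ k f, ‖T k f‖ ≤ ‖f‖)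
    (f : E) : ‖(List.ofFn T).foldr (· ∘ ·) id f‖ ≤ ‖f‖ := by
  induction n with
  | zero => rfl
  | succ n ih =>
    rw [List.ofFn_succ, List.foldr_cons]
    exact (hT 0 _).trans (ih fun k => hT k.succ)

lemma norm_foldr_comp_ofFn_sub_le {n : ℕ} {A B : Fin n → E → E} {ε : Fin n → ℝ}
    (hA : ∀ k, LipschitzWith 1 (A k)) (hB : ∀ k f, ‖B k f‖ ≤ ‖f‖) (hε : ∀ k, 0 ≤ ε k)
    (hAB : ∀ k f, ‖A k f - B k f‖ ≤ ε k * ‖f‖) (f : E) :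
    ‖(List.ofFn A).foldr (· ∘ ·) id f - (List.ofFn B).foldr (· ∘ ·) id f‖ ≤ (∑ k, ε k) * ‖f‖ := by
  induction n with
  | zero => simp
  | succ n ih =>
    simp only [List.ofFn_succ, List.foldr_cons, Function.comp_apply, Fin.sum_univ_succ]
    set u := (List.ofFn fun k => A k.succ).foldr (· ∘ ·) id f
    set v := (List.ofFn fun k => B k.succ).foldr (· ∘ ·) id f
    have huv : ‖u - v‖ ≤ (∑ k : Fin n, ε k.succ) * ‖f‖ :=
      ih (fun k => hA k.succ) (fun k => hB k.succ) (fun k => hε k.succ) (fun k => hAB k.succ)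
    have hv : ‖v‖ ≤ ‖f‖ := norm_foldr_comp_ofFn_le (fun k => hB k.succ) f
    calc ‖A 0 u - B 0 v‖ ≤ ‖A 0 u - A 0 v‖ + ‖A 0 v - B 0 v‖ :=
          norm_sub_le_norm_sub_add_norm_sub _ _ _
      _ ≤ ‖u - v‖ + ε 0 * ‖v‖ := by
          gcongr
          · simpa using (hA 0).norm_sub_le u v
          · exact hAB 0 v
      _ ≤ (∑ k : Fin n, ε k.succ) * ‖f‖ + ε 0 * ‖f‖ := by gcongr; exact hε 0
      _ = (ε 0 + ∑ k : Fin n, ε k.succ) * ‖f‖ := by ring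

end Composition

section EulerStep

variable {E : Type*} [SeminormedAddCommGroup E] [NormedSpace ℝ E] {Q : E → E}

lemma eulerStep_zero (hQ0 : Q 0 = 0) (d : ℝ) : eulerStep Q d 0 = 0 := by
  simp [eulerStep, hQ0]

lemma norm_eulerStep_le (hQ0 : Q 0 = 0) {d : ℝ} (hd : LipschitzWith 1 (eulerStep Q d))
    (f : E) : ‖eulerStep Q d f‖ ≤ ‖f‖ := by
  simpa using hd.norm_le_mul (eulerStep_zero hQ0 d) f

variable {M : NNReal} (hQ : LipschitzWith M Q) (hQ0 : Q 0 = 0)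
include hQ hQ0

lemma norm_foldr_eulerStep_sub_self_le {m : ℕ} {d : Fin m → ℝ} (hd : ∀ i, 0 ≤ d i)
    (hstep : ∀ i, LipschitzWith 1 (eulerStep Q (d i))) (f : E) :
    ‖(List.ofFn fun i => eulerStep Q (d i)).foldr (· ∘ ·) (id : E → E) f - f‖ ≤
      (∑ i, d i) * M * ‖f‖ := by
  induction m with
  | zero => simp
  | succ m ih =>
    simp only [List.ofFn_succ, List.foldr_cons, Function.comp_apply, Fin.sum_univ_succ]
    set g := (List.ofFn fun i => eulerStep Q (d i.succ)).foldr (· ∘ ·) id f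
    have hg : ‖g - f‖ ≤ (∑ i : Fin m, d i.succ) * M * ‖f‖ :=
      ih (fun i => hd i.succ) (fun i => hstep i.succ)
    have hQg : ‖Q g‖ ≤ M * ‖f‖ :=
      (hQ.norm_le_mul hQ0 g).trans <| by
        gcongr
        exact norm_foldr_comp_ofFn_le (fun i => norm_eulerStep_le hQ0 (hstep i.succ)) f
    calc ‖eulerStep Q (d 0) g - f‖ = ‖(g - f) + d 0 • Q g‖ := by
          rw [eulerStep, sub_add_eq_add_sub]
      _ ≤ ‖g - f‖ + d 0 * ‖Q g‖ :=
          (norm_add_le _ _).trans_eq (by rw [norm_smul, Real.norm_of_nonneg (hd 0)])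
      _ ≤ (∑ i : Fin m, d i.succ) * M * ‖f‖ + d 0 * (M * ‖f‖) := by
          gcongr; exact hd 0
      _ = (d 0 + ∑ i : Fin m, d i.succ) * M * ‖f‖ := by ring

lemma norm_foldr_eulerStep_sub_eulerStep_sum_le {m : ℕ} {d : Fin m → ℝ} (hd : ∀ i, 0 ≤ d i)
    (hstep : ∀ i, LipschitzWith 1 (eulerStep Q (d i))) (f : E) :
    ‖(List.ofFn fun i => eulerStep Q (d i)).foldr (· ∘ ·) (id : E → E) f -
        eulerStep Q (∑ i, d i) f‖ ≤ (∑ i, d i) ^ 2 * M ^ 2 * ‖f‖ := by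
  induction m with
  | zero => simp [eulerStep]
  | succ m ih =>
    simp only [List.ofFn_succ, List.foldr_cons, Function.comp_apply, Fin.sum_univ_succ]
    set g := (List.ofFn fun i => eulerStep Q (d i.succ)).foldr (· ∘ ·) id f
    set S := ∑ i : Fin m, d i.succ
    have hS : 0 ≤ S := Finset.sum_nonneg fun i _ => hd i.succ
    have hg : ‖g - eulerStep Q S f‖ ≤ S ^ 2 * M ^ 2 * ‖f‖ :=
      ih (fun i => hd i.succ) (fun i => hstep i.succ)
    have hQg : ‖Q g - Q f‖ ≤ M * (S * M * ‖f‖) :=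
      (hQ.norm_sub_le g f).trans <| by
        gcongr
        exact norm_foldr_eulerStep_sub_self_le hQ hQ0 (fun i => hd i.succ)
          (fun i => hstep i.succ) f
    calc ‖eulerStep Q (d 0) g - eulerStep Q (d 0 + S) f‖
        = ‖(g - eulerStep Q S f) + d 0 • (Q g - Q f)‖ := by
          simp only [eulerStep, add_smul, smul_sub]; abel_nf
      _ ≤ ‖g - eulerStep Q S f‖ + d 0 * ‖Q g - Q f‖ :=
          (norm_add_le _ _).trans_eq (by rw [norm_smul, Real.norm_of_nonneg (hd 0)])
      _ ≤ S ^ 2 * M ^ 2 * ‖f‖ + d 0 * (M * (S * M * ‖f‖)) := by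
          gcongr; exact hd 0
      _ ≤ (d 0 + S) ^ 2 * M ^ 2 * ‖f‖ := by
          have hd0 := hd 0
          have hcross : 0 ≤ d 0 * (d 0 + S) * (M : ℝ) ^ 2 * ‖f‖ := by positivity
          nlinarith

end EulerStep

section SupNorm

variable {X : Type*} [Fintype X]

lemma neg_norm_le_apply (f : X → ℝ) (x : X) : -‖f‖ ≤ f x :=
  neg_le_of_abs_le (norm_le_pi_norm f x)

lemma apply_le_norm (f : X → ℝ) (x : X) : f x ≤ ‖f‖ :=
  le_of_abs_le (norm_le_pi_norm f x)

lemma norm_le_of_forall_abs_le {f : X → ℝ} {c : ℝ} (hc : 0 ≤ c) (hf : ∀ x, |f x| ≤ c) :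
    ‖f‖ ≤ c :=
  (pi_norm_le_iff_of_nonneg hc).2 hf

lemma opNorm_nonneg (A : (X → ℝ) → (X → ℝ)) : 0 ≤ opNorm A :=
  Real.iSup_nonneg fun _ => norm_nonneg _

lemma opDist_le {A B : (X → ℝ) → (X → ℝ)} {c : ℝ} (hc : 0 ≤ c)
    (h : ∀ f, ‖A f - B f‖ ≤ c * ‖f‖) : opDist A B ≤ c :=
  Real.iSup_le (fun f => by simpa [f.2] using h f.1) hc

-- `opNorm A` is a supremum in `ℝ`, hence meaningless (`0`) unless `A` is known to be bounded.
lemma norm_apply_le_opNorm_mul {A : (X → ℝ) → (X → ℝ)}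
    (hA : ∀ c : ℝ, 0 ≤ c → ∀ f, A (c • f) = c • A f) (hA0 : A 0 = 0)
    (hbdd : ∃ K, ∀ f, ‖A f‖ ≤ K * ‖f‖) (f : X → ℝ) :
    ‖A f‖ ≤ opNorm A * ‖f‖ := by
  obtain ⟨K, hK⟩ := hbdd
  rcases eq_or_ne f 0 with rfl | hf
  · simp [hA0]
  have hf' : 0 < ‖f‖ := norm_pos_iff.2 hf
  have hunit : ‖‖f‖⁻¹ • f‖ = 1 := by
    rw [norm_smul, norm_inv, norm_norm, inv_mul_cancel₀ hf'.ne']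
  have hbddAbove : BddAbove (Set.range fun g : {g : X → ℝ // ‖g‖ = 1} => ‖A g.1‖) :=
    ⟨K, by rintro _ ⟨g, rfl⟩; simpa [g.2] using hK g.1⟩
  calc ‖A f‖ = ‖A (‖f‖⁻¹ • f)‖ * ‖f‖ := by
        rw [hA _ (inv_nonneg.2 hf'.le), norm_smul, norm_inv, norm_norm]
        field_simp
    _ ≤ opNorm A * ‖f‖ := by
        gcongr
        exact le_ciSup hbddAbove ⟨_, hunit⟩

end SupNorm

namespace IsLowerTransitionRateOperator

variable {X : Type*} [Fintype X] [DecidableEq X] {Q : (X → ℝ) → (X → ℝ)}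

lemma map_const (hQ : IsLowerTransitionRateOperator Q) (c : ℝ) : Q (fun _ => c) = 0 :=
  hQ.1 c

lemma apply_single_nonneg (hQ : IsLowerTransitionRateOperator Q) {x y : X} (hyx : y ≠ x) :
    0 ≤ Q (Pi.single y 1) x :=
  hQ.2.1 x y hyx

lemma apply_add_apply_le (hQ : IsLowerTransitionRateOperator Q) (f g : X → ℝ) (x : X) :
    Q f x + Q g x ≤ Q (f + g) x :=
  hQ.2.2.1 f g x

lemma map_smul (hQ : IsLowerTransitionRateOperator Q) {c : ℝ} (hc : 0 ≤ c) (f : X → ℝ) :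
    Q (c • f) = c • Q f :=
  hQ.2.2.2 c hc f

variable (hQ : IsLowerTransitionRateOperator Q)
include hQ

lemma map_zero : Q 0 = 0 := hQ.map_const 0

lemma apply_sub_le (f g : X → ℝ) (x : X) : Q (f - g) x ≤ Q f x - Q g x := by
  have := hQ.apply_add_apply_le (f - g) g x
  rw [sub_add_cancel] at this
  linarith

lemma apply_le_neg_apply_neg (f : X → ℝ) (x : X) : Q f x ≤ -Q (-f) x := by
  simpa [hQ.map_zero] using hQ.apply_sub_le 0 (-f) x

lemma map_add_const (f : X → ℝ) (c : ℝ) : Q (f + fun _ => c) = Q f := by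
  funext x
  have h₁ := hQ.apply_add_apply_le f (fun _ => c) x
  have h₂ := hQ.apply_add_apply_le (f + fun _ => c) (fun _ => -c) x
  have hcancel : (f + fun _ => c) + (fun _ => -c) = f := by funext; simp
  rw [hcancel] at h₂
  simp only [hQ.map_const, Pi.zero_apply] at h₁ h₂
  linarith

lemma apply_mul_apply_single_le {h : X → ℝ} (hh : 0 ≤ h) (x : X) :
    h x * Q (Pi.single x 1) x ≤ Q h x := by
  have hsingle : ∀ y, Q (Pi.single y (h y)) x = h y * Q (Pi.single y 1) x := fun y => by
    rw [← smul_eq_mul, ← Pi.smul_apply, ← hQ.map_smul (hh y), ← Pi.single_smul, smul_eq_mul,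
      mul_one]
  have hsuper : ∑ y, Q (Pi.single y (h y)) x ≤ Q h x := by
    have := Finset.le_sum_of_subadditive (fun g : X → ℝ => -Q g x)
      (by simp [hQ.map_zero]) (fun f g => by linarith [hQ.apply_add_apply_le f g x])
      Finset.univ (fun y => Pi.single y (h y))
    rw [Finset.univ_sum_single, Finset.sum_neg_distrib] at this
    linarith
  calc h x * Q (Pi.single x 1) x
      ≤ h x * Q (Pi.single x 1) x + ∑ y ∈ Finset.univ.erase x, h y * Q (Pi.single y 1) x :=
        le_add_of_nonneg_right <| Finset.sum_nonneg fun y hy =>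
          mul_nonneg (hh y) (hQ.apply_single_nonneg (Finset.ne_of_mem_erase hy))
    _ = ∑ y, Q (Pi.single y (h y)) x := by
        simp only [hsingle]
        exact Finset.add_sum_erase _ (fun y => h y * Q (Pi.single y 1) x) (Finset.mem_univ x)
    _ ≤ Q h x := hsuper

lemma neg_two_mul_norm_le_apply (f : X → ℝ) (x : X) :
    -(2 * ‖f‖ * |Q (Pi.single x 1) x|) ≤ Q f x := by
  have hpos : 0 ≤ f + fun _ => ‖f‖ := fun y => by
    simpa using (neg_le_iff_add_nonneg).1 (neg_norm_le_apply f y)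
  have hfx : f x + ‖f‖ ≤ 2 * ‖f‖ := by linarith [apply_le_norm f x]
  have hfx' : 0 ≤ f x + ‖f‖ := hpos x
  have hQf := hQ.apply_mul_apply_single_le hpos x
  rw [hQ.map_add_const] at hQf
  simp only [Pi.add_apply] at hQf
  nlinarith [mul_le_mul_of_nonneg_right hfx (abs_nonneg (Q (Pi.single x 1) x)),
    mul_le_mul_of_nonneg_left (neg_abs_le (Q (Pi.single x 1) x)) hfx']

lemma exists_norm_apply_le : ∃ K, ∀ f : X → ℝ, ‖Q f‖ ≤ K * ‖f‖ := by
  refine ⟨2 * ∑ y, |Q (Pi.single y 1) y|, fun f => ?_⟩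
  have hlower : ∀ f x, -((2 * ∑ y, |Q (Pi.single y 1) y|) * ‖f‖) ≤ Q f x := fun f x => by
    have hterm : |Q (Pi.single x 1) x| ≤ ∑ y, |Q (Pi.single y 1) y| :=
      Finset.single_le_sum (f := fun y => |Q (Pi.single y 1) y|) (fun y _ => abs_nonneg _)
        (Finset.mem_univ x)
    nlinarith [hQ.neg_two_mul_norm_le_apply f x, mul_le_mul_of_nonneg_left hterm (norm_nonneg f)]
  refine norm_le_of_forall_abs_le (by positivity) fun x => abs_le.2 ⟨hlower f x, ?_⟩
  have := hlower (-f) x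
  rw [norm_neg] at this
  linarith [hQ.apply_le_neg_apply_neg f x]

lemma norm_apply_le (f : X → ℝ) : ‖Q f‖ ≤ opNorm Q * ‖f‖ :=
  norm_apply_le_opNorm_mul (fun _ hc => hQ.map_smul hc) hQ.map_zero hQ.exists_norm_apply_le f

lemma norm_sub_le (f g : X → ℝ) : ‖Q f - Q g‖ ≤ opNorm Q * ‖f - g‖ := by
  refine norm_le_of_forall_abs_le (mul_nonneg (opNorm_nonneg Q) (norm_nonneg _)) fun x =>
    abs_le.2 ⟨?_, ?_⟩
  · calc -(opNorm Q * ‖f - g‖) ≤ -‖Q (f - g)‖ := neg_le_neg (hQ.norm_apply_le _)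
      _ ≤ Q (f - g) x := neg_norm_le_apply _ x
      _ ≤ Q f x - Q g x := hQ.apply_sub_le f g x
      _ = (Q f - Q g) x := rfl
  · calc (Q f - Q g) x ≤ -Q (g - f) x := by
          simp only [Pi.sub_apply]; linarith [hQ.apply_sub_le g f x]
      _ ≤ ‖Q (g - f)‖ := by linarith [neg_norm_le_apply (Q (g - f)) x]
      _ ≤ opNorm Q * ‖f - g‖ := by rw [norm_sub_rev f g]; exact hQ.norm_apply_le _

lemma lipschitzWith_opNorm : LipschitzWith ⟨opNorm Q, opNorm_nonneg Q⟩ Q :=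
  LipschitzWith.of_dist_le_mul fun f g => by
    rw [dist_eq_norm, dist_eq_norm]
    exact hQ.norm_sub_le f g

lemma neg_opNorm_mul_le_apply {h : X → ℝ} (hh : 0 ≤ h) (x : X) : -(opNorm Q * h x) ≤ Q h x := by
  have hdiag : -opNorm Q ≤ Q (Pi.single x 1) x := by
    have := hQ.norm_apply_le (Pi.single x 1)
    rw [Pi.norm_single, norm_one, mul_one] at this
    linarith [neg_norm_le_apply (Q (Pi.single x 1)) x]
  have hx : 0 ≤ h x := hh x
  nlinarith [hQ.apply_mul_apply_single_le hh x, mul_le_mul_of_nonneg_left hdiag hx]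

lemma neg_norm_le_eulerStep_apply {d : ℝ} (hd : 0 ≤ d) (hdQ : d * opNorm Q ≤ 1) (h : X → ℝ)
    (x : X) : -‖h‖ ≤ eulerStep Q d h x := by
  have hpos : 0 ≤ h + fun _ => ‖h‖ := fun y => by
    simpa using (neg_le_iff_add_nonneg).1 (neg_norm_le_apply h y)
  have hlower := hQ.neg_opNorm_mul_le_apply hpos x
  rw [hQ.map_add_const] at hlower
  simp only [Pi.add_apply] at hlower
  have hx : 0 ≤ h x + ‖h‖ := hpos x
  simp only [eulerStep, Pi.add_apply, Pi.smul_apply, smul_eq_mul]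
  nlinarith [mul_le_mul_of_nonneg_left hlower hd, mul_le_mul_of_nonneg_right hdQ hx]

lemma eulerStep_apply_sub_le {d : ℝ} (hd : 0 ≤ d) (u v : X → ℝ) (x : X) :
    eulerStep Q d (u - v) x ≤ eulerStep Q d u x - eulerStep Q d v x := by
  simp only [eulerStep, Pi.add_apply, Pi.smul_apply, Pi.sub_apply, smul_eq_mul]
  nlinarith [mul_le_mul_of_nonneg_left (hQ.apply_sub_le u v x) hd]

lemma lipschitzWith_eulerStep {d : ℝ} (hd : 0 ≤ d) (hdQ : d * opNorm Q ≤ 1) :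
    LipschitzWith 1 (eulerStep Q d) := by
  refine LipschitzWith.mk_one fun u v => ?_
  rw [dist_eq_norm, dist_eq_norm]
  refine norm_le_of_forall_abs_le (norm_nonneg _) fun x => abs_le.2 ⟨?_, ?_⟩
  · exact (hQ.neg_norm_le_eulerStep_apply hd hdQ (u - v) x).trans
      (hQ.eulerStep_apply_sub_le hd u v x)
  · have := (hQ.neg_norm_le_eulerStep_apply hd hdQ (v - u) x).trans
      (hQ.eulerStep_apply_sub_le hd v u x)
    rw [norm_sub_rev] at this
    simp only [Pi.sub_apply]
    linarith

end IsLowerTransitionRateOperator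

lemma sum_sq_le_iSup_mul_sum {ι : Type*} [Fintype ι] {a : ι → ℝ} (ha : 0 ≤ a) :
    ∑ k, a k ^ 2 ≤ (⨆ k, a k) * ∑ k, a k := by
  rw [Finset.mul_sum]
  refine Finset.sum_le_sum fun k _ => ?_
  rw [sq]
  exact mul_le_mul_of_nonneg_right (le_ciSup (Finite.bddAbove_range a) k) (ha k)

theorem stmt17_general {X : Type*} [Fintype X] [DecidableEq X]
    (Ql : (X → ℝ) → (X → ℝ)) (hQl : IsLowerTransitionRateOperator Ql)
    {n : ℕ} (m : Fin (n + 1) → ℕ) (Δ : (k : Fin (n + 1)) → Fin (m k) → ℝ)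
    (hΔ0 : ∀ k i, 0 ≤ Δ k i)
    (hδQl : (⨆ k, ∑ i, Δ k i) * opNorm Ql ≤ 1) :
    opDist
        (compFamily (fun k => compFamily (fun i => fun g => g + Δ k i • Ql g)))
        (compFamily (fun k => fun g => g + (∑ i, Δ k i) • Ql g)) ≤
      (⨆ k, ∑ i, Δ k i) * (∑ k, ∑ i, Δ k i) * opNorm Ql ^ 2 := by
  set δ := ⨆ k, ∑ i, Δ k i
  have hsum_nonneg : ∀ k, 0 ≤ ∑ i, Δ k i := fun k => Finset.sum_nonneg fun i _ => hΔ0 k i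
  have hsum_le : ∀ k, ∑ i, Δ k i ≤ δ := le_ciSup (Finite.bddAbove_range _)
  have hΔ_le : ∀ k i, Δ k i ≤ δ := fun k i =>
    (Finset.single_le_sum (fun j _ => hΔ0 k j) (Finset.mem_univ i)).trans (hsum_le k)
  have hstep : ∀ d, 0 ≤ d → d ≤ δ → LipschitzWith 1 (eulerStep Ql d) := fun d hd hdδ =>
    hQl.lipschitzWith_eulerStep hd
      ((mul_le_mul_of_nonneg_right hdδ (opNorm_nonneg Ql)).trans hδQl)
  have hδ : 0 ≤ δ := (hsum_nonneg 0).trans (hsum_le 0)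
  refine opDist_le (mul_nonneg (mul_nonneg hδ (Finset.sum_nonneg fun k _ => hsum_nonneg k))
    (sq_nonneg _)) fun f => ?_
  calc _ ≤ (∑ k, (∑ i, Δ k i) ^ 2 * opNorm Ql ^ 2) * ‖f‖ :=
        norm_foldr_comp_ofFn_sub_le
          (fun k => lipschitzWith_foldr_comp_ofFn fun i => hstep _ (hΔ0 k i) (hΔ_le k i))
          (fun k => norm_eulerStep_le hQl.map_zero (hstep _ (hsum_nonneg k) (hsum_le k)))
          (fun k => by positivity)
          (fun k => norm_foldr_eulerStep_sub_eulerStep_sum_le hQl.lipschitzWith_opNorm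
            hQl.map_zero (hΔ0 k) (fun i => hstep _ (hΔ0 k i) (hΔ_le k i))) f
    _ ≤ δ * (∑ k, ∑ i, Δ k i) * opNorm Ql ^ 2 * ‖f‖ := by
        rw [← Finset.sum_mul]
        gcongr
        exact sum_sq_le_iSup_mul_sum hsum_nonneg

/-- For groups of step sizes `Δ_{k,i} ≥ 0` with group sums `Δ_k = Σ_i Δ_{k,i}`, total
`C = Σ_k Δ_k` and mesh `δ = max_k Δ_k`, if `δ‖Q̲‖ ≤ 1` then
`‖∏_k ∏_i (I+Δ_{k,i}Q̲) − ∏_k (I+Δ_kQ̲)‖ ≤ δ C ‖Q̲‖²`. -/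
theorem stmt17 {X : Type*} [Fintype X] [Nonempty X] [DecidableEq X]
    (Ql : (X → ℝ) → (X → ℝ)) (hQl : IsLowerTransitionRateOperator Ql)
    {n : ℕ} (m : Fin (n + 1) → ℕ) (Δ : (k : Fin (n + 1)) → Fin (m k) → ℝ)
    (hΔ0 : ∀ k i, 0 ≤ Δ k i)
    (hδQl : (⨆ k, ∑ i, Δ k i) * opNorm Ql ≤ 1) :
    opDist
        (compFamily (fun k => compFamily (fun i => fun g => g + Δ k i • Ql g)))
        (compFamily (fun k => fun g => g + (∑ i, Δ k i) • Ql g)) ≤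
      (⨆ k, ∑ i, Δ k i) * (∑ k, ∑ i, Δ k i) * opNorm Ql ^ 2 :=
  stmt17_general Ql hQl m Δ hΔ0 hδQl
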